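/- Let 0 < K ≤ 1. Then for every b ∈ ℝ the equation m = tanh(K·m + b) has exactly one real solution; in particular, for b = 0 the unique solution is m = 0. -/

import Mathlib

/-!
Since `(x - tanh x)' = tanh² x` vanishes only at `0`, `tanh y - tanh x < y - x` whenever
`x < y`. For `0 < K ≤ 1` this makes `m ↦ m - tanh (K m + b)` strictly increasing, so it has at
most one zero; it has one because `|tanh| < 1` makes it negative at `-1` and positive at `1`.
-/

open Real

namespace Real

lemma tanh_eq_fun_sinh_div_cosh : tanh = fun x => sinh x / cosh x :=
  funext tanh_eq_sinh_div_cosh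

theorem continuous_tanh : Continuous tanh := by
  rw [tanh_eq_fun_sinh_div_cosh]
  exact continuous_sinh.div continuous_cosh fun x => (cosh_pos x).ne'

theorem hasDerivAt_tanh (x : ℝ) : HasDerivAt tanh (1 - tanh x ^ 2) x := by
  rw [tanh_eq_fun_sinh_div_cosh]
  refine ((hasDerivAt_sinh x).div (hasDerivAt_cosh x) (cosh_pos x).ne').congr_deriv ?_
  field_simp

theorem strictMono_id_sub_tanh : StrictMono fun x => x - tanh x := by
  refine strictMono_of_odd_strictMonoOn_nonneg (fun x => by rw [tanh_neg]; ring) ?_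
  refine strictMonoOn_of_hasDerivWithinAt_pos (convex_Ici 0)
    (continuous_id.sub continuous_tanh).continuousOn
    (fun x _ => ((hasDerivAt_id x).sub (hasDerivAt_tanh x)).hasDerivWithinAt) fun x hx => ?_
  rw [interior_Ici] at hx
  have : tanh x ≠ 0 := tanh_zero ▸ tanh_injective.ne hx.ne'
  ring_nf
  positivity

theorem tanh_sub_tanh_lt {x y : ℝ} (h : x < y) : tanh y - tanh x < y - x := by
  have := strictMono_id_sub_tanh h
  dsimp only at this
  linarith

theorem exists_eq_tanh_comp {f : ℝ → ℝ} (hf : Continuous f) : ∃ m, m = tanh (f m) := by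
  have hg : Continuous fun m => m - tanh (f m) := continuous_id.sub (continuous_tanh.comp hf)
  have hzero : (0 : ℝ) ∈ Set.Icc (-1 - tanh (f (-1))) (1 - tanh (f 1)) :=
    ⟨by linarith [neg_one_lt_tanh (f (-1))], by linarith [tanh_lt_one (f 1)]⟩
  obtain ⟨m, -, hm⟩ := intermediate_value_Icc (by norm_num) hg.continuousOn hzero
  exact ⟨m, sub_eq_zero.mp hm⟩

end Real

theorem strictMono_sub_tanh_mul_add {K : ℝ} (hK0 : 0 < K) (hK1 : K ≤ 1) (b : ℝ) :
    StrictMono fun m => m - tanh (K * m + b) := by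
  intro m₁ m₂ hm
  have key := tanh_sub_tanh_lt (show K * m₁ + b < K * m₂ + b by gcongr)
  dsimp only
  nlinarith

theorem eq_of_eq_tanh_mul_add {K b m₁ m₂ : ℝ} (hK0 : 0 < K) (hK1 : K ≤ 1)
    (h₁ : m₁ = tanh (K * m₁ + b)) (h₂ : m₂ = tanh (K * m₂ + b)) : m₁ = m₂ :=
  (strictMono_sub_tanh_mul_add hK0 hK1 b).injective <| by rw [← h₁, ← h₂, sub_self, sub_self]

theorem curie_weiss_unique_solution
    (K : ℝ) (hK0 : 0 < K) (hK1 : K ≤ 1) :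
    (∀ b : ℝ, ∃! m : ℝ, m = Real.tanh (K * m + b)) ∧
      (∀ m : ℝ, m = Real.tanh (K * m + 0) → m = 0) := by
  refine ⟨fun b => ?_, fun m hm => eq_of_eq_tanh_mul_add hK0 hK1 hm (by simp)⟩
  obtain ⟨m, hm⟩ := exists_eq_tanh_comp (f := fun m => K * m + b) (by fun_prop)
  exact ⟨m, hm, fun m' hm' => eq_of_eq_tanh_mul_add hK0 hK1 hm' hm⟩
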